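/- arXiv:2406.18670 — 2 statements merged into one kernel-verified Lean document; each statement's English description precedes it below -/
import Mathlib

section
/- Dual rounding sandwich (second half of the paper's Theorem relating maxq, fevc, ν, ν°): under the conic assumptions, suppose α > 0 is such that for every Y ∈ A with diag(Y) = 1 there exists a probability vector p ∈ R_+^{F(A)} (i.e., ∑_{U∈F(A)} p_U = 1) with ∑_{U∈F(A)} p_U s_U s_Uᵀ − αY ∈ lift. Then for every Z ∈ K*, ν°(Z) ≤ fevc(Z) ≤ (1/α)·ν°(Z). -/
open Matrix Finset

noncomputable section

/-- The trace inner product `⟨X,Y⟩ = tr(XY)` on symmetric matrices. -/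
def ip {n : ℕ} (X Y : Matrix (Fin n) (Fin n) ℝ) : ℝ := (X * Y).trace

/-- The signed incidence vector `s_U ∈ {±1}ⁿ` of `U ⊆ [n]`. -/
def sgn {n : ℕ} (U : Finset (Fin n)) : Fin n → ℝ := fun i => if i ∈ U then 1 else -1

/-- The rank-one sign matrix `s_U s_Uᵀ`. -/
def stensor {n : ℕ} (U : Finset (Fin n)) : Matrix (Fin n) (Fin n) ℝ :=
  fun i j => sgn U i * sgn U j

/-- The quadratic form `vᵀ W v`. -/
def qform {n : ℕ} (W : Matrix (Fin n) (Fin n) ℝ) (v : Fin n → ℝ) : ℝ :=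
  ∑ i, ∑ j, v i * W i j * v j

/-- The dual cone (within the space `Sym(n)` of symmetric matrices) of a set `S ⊆ Sym(n)`. -/
def dualSet {n : ℕ} (S : Set (Matrix (Fin n) (Fin n) ℝ)) : Set (Matrix (Fin n) (Fin n) ℝ) :=
  {X | X.IsSymm ∧ ∀ Y ∈ S, 0 ≤ ip X Y}

/-- The data of the conic framework: closed convex cones `A`, `K̂` of symmetric matrices,
and a linear map `L`. -/
structure ConicSetting (n k : ℕ) where
  A : Set (Matrix (Fin n) (Fin n) ℝ)
  Khat : Set (Matrix (Fin n) (Fin n) ℝ)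
  L : Matrix (Fin n) (Fin n) ℝ →ₗ[ℝ] (Fin k → ℝ)
  A_symm : ∀ X ∈ A, X.IsSymm
  A_closed : IsClosed A
  A_smul : ∀ c : ℝ, 0 ≤ c → ∀ X ∈ A, c • X ∈ A
  A_add : ∀ X ∈ A, ∀ Y ∈ A, X + Y ∈ A
  Khat_symm : ∀ X ∈ Khat, X.IsSymm
  Khat_closed : IsClosed Khat
  Khat_smul : ∀ c : ℝ, 0 ≤ c → ∀ X ∈ Khat, c • X ∈ Khat
  Khat_add : ∀ X ∈ Khat, ∀ Y ∈ Khat, X + Y ∈ Khat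

namespace ConicSetting

variable {n k : ℕ} (S : ConicSetting n k)

/-- `K := K̂ ∩ ker L`. -/
def K : Set (Matrix (Fin n) (Fin n) ℝ) := {X | X ∈ S.Khat ∧ S.L X = 0}

/-- `F(A) := {U ⊆ [n] : s_U s_Uᵀ ∈ A}`. -/
def FA : Set (Finset (Fin n)) := {U | stensor U ∈ S.A}

/-- The range of the adjoint of `L` restricted to `Sym(n)`, i.e. the orthogonal complement
of `ker L ∩ Sym(n)` inside `Sym(n)`. -/
def rangeLstar : Set (Matrix (Fin n) (Fin n) ℝ) :=
  {Q | Q.IsSymm ∧ ∀ Y : Matrix (Fin n) (Fin n) ℝ, Y.IsSymm → S.L Y = 0 → ip Q Y = 0}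

/-- `lift := K̂* + range(L*)`. -/
def lift : Set (Matrix (Fin n) (Fin n) ℝ) :=
  {X | ∃ P ∈ dualSet S.Khat, ∃ Q ∈ S.rangeLstar, X = P + Q}

/-- `K* := {X ∈ ker L : ⟨X,Y⟩ ≥ 0 for all Y ∈ K}` (within `Sym(n)`). -/
def Kstar : Set (Matrix (Fin n) (Fin n) ℝ) :=
  {X | X.IsSymm ∧ S.L X = 0 ∧ ∀ Y ∈ S.K, 0 ≤ ip X Y}

/-- The convex cone generated by `CUT^A = conv{s_U s_Uᵀ : U ∈ F(A)}`. -/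
def coneCUT : Set (Matrix (Fin n) (Fin n) ℝ) :=
  {X | ∃ y : Finset (Fin n) → ℝ, (∀ U, 0 ≤ y U) ∧ (∀ U, U ∉ S.FA → y U = 0) ∧
    X = ∑ U : Finset (Fin n), y U • stensor U}

/-- The conic assumptions: `A ⊆ PSD(n)`, `K ⊆ A*`, `cone(CUT^A)` has nonempty interior in
`Sym(n)`, and `K̂` has a nonzero Slater point in `ker L` (interior taken in `Sym(n)`). -/
structure Assumptions : Prop where
  A_psd : ∀ X ∈ S.A, X.PosSemidef
  K_sub_Astar : S.K ⊆ dualSet S.A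
  cut_interior : (interior {X : {M : Matrix (Fin n) (Fin n) ℝ // M.IsSymm} |
      (X : Matrix (Fin n) (Fin n) ℝ) ∈ S.coneCUT}).Nonempty
  Khat_slater : ∃ X : {M : Matrix (Fin n) (Fin n) ℝ // M.IsSymm},
      (X : Matrix (Fin n) (Fin n) ℝ) ≠ 0 ∧
      X ∈ interior {M : {M : Matrix (Fin n) (Fin n) ℝ // M.IsSymm} |
        (M : Matrix (Fin n) (Fin n) ℝ) ∈ S.Khat} ∧
      S.L X = 0

/-- `maxq(W) := max{s_Uᵀ W s_U : U ∈ F(A)}`. -/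
def maxq (W : Matrix (Fin n) (Fin n) ℝ) : ℝ :=
  sSup {r | ∃ U ∈ S.FA, r = qform W (sgn U)}

/-- `ν(W) := max{⟨W,Y⟩ : Y ∈ A, diag(Y) = 1}`. -/
def nu (W : Matrix (Fin n) (Fin n) ℝ) : ℝ :=
  sSup {r | ∃ Y ∈ S.A, (∀ i, Y i i = 1) ∧ r = ip W Y}

/-- `y ∈ ℝ₊^{F(A)}` is a tensor sign cover for `Z`:
`∑_{U ∈ F(A)} y_U s_U s_Uᵀ ⪰_lift Z`. -/
def CoverFeas (Z : Matrix (Fin n) (Fin n) ℝ) (y : Finset (Fin n) → ℝ) : Prop :=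
  (∀ U, 0 ≤ y U) ∧ (∀ U, U ∉ S.FA → y U = 0) ∧
  (∑ U : Finset (Fin n), y U • stensor U) - Z ∈ S.lift

/-- `fevc(Z)`: minimum total weight of a tensor sign cover of `Z`. -/
def fevc (Z : Matrix (Fin n) (Fin n) ℝ) : ℝ :=
  sInf {r | ∃ y, S.CoverFeas Z y ∧ r = ∑ U : Finset (Fin n), y U}

/-- `ν°(Z) := inf{μ ≥ 0 : ∃ Y ∈ A, diag(Y) = μ·1, Y ⪰_lift Z}`. -/
def nuPolar (Z : Matrix (Fin n) (Fin n) ℝ) : ℝ :=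
  sInf {μ | 0 ≤ μ ∧ ∃ Y ∈ S.A, (∀ i, Y i i = μ) ∧ Y - Z ∈ S.lift}

end ConicSetting

/-!
A tensor sign cover `y` of `Z` gives the matrix `∑ y_U s_U s_Uᵀ ∈ A`, whose diagonal is the constant
`∑ y_U`, so it is feasible for `ν°(Z)` with the same value. Conversely, if `Y ∈ A` has constant
diagonal `μ > 0` and `Y ⪰_lift Z`, rounding `Y / μ` gives a probability vector `p` with
`∑ p_U s_U s_Uᵀ ⪰_lift (α / μ) Y`, and since `lift` is a convex cone, `(μ / α) p` is a cover of `Z`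
of weight `μ / α`. For `μ = 0` positive semidefiniteness forces `Y = 0`, so the zero vector is
already a cover. Comparing the two infima gives the sandwich.
-/

open scoped Pointwise

theorem Matrix.PosSemidef.eq_zero_of_diag_eq_zero {ι : Type*} [Fintype ι]
    {Y : Matrix ι ι ℝ} (hY : Y.PosSemidef) (hd : ∀ i, Y i i = 0) : Y = 0 :=
  hY.trace_eq_zero_iff.1 (by simp [Matrix.trace, hd])

/-- For `N = ∅` both sides are the junk value `sInf ∅ = 0`. -/
theorem Real.sInf_le_sInf_and_sInf_le_of_div_mem {F N : Set ℝ} {α : ℝ} (hα : 0 < α)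
    (hN : ∀ μ ∈ N, 0 ≤ μ) (hFN : F ⊆ N) (hNF : ∀ μ ∈ N, μ / α ∈ F) :
    sInf N ≤ sInf F ∧ sInf F ≤ 1 / α * sInf N := by
  rcases N.eq_empty_or_nonempty with rfl | hNne
  · simp [Set.subset_empty_iff.1 hFN]
  have hNbdd : BddBelow N := ⟨0, hN⟩
  have hsmul : α⁻¹ • N ⊆ F := by
    rintro _ ⟨μ, hμ, rfl⟩
    simpa [div_eq_inv_mul] using hNF μ hμ
  constructor
  · exact csInf_le_csInf hNbdd (hNne.smul_set.mono hsmul) hFN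
  · calc sInf F ≤ sInf (α⁻¹ • N) :=
          csInf_le_csInf (hNbdd.mono hFN) hNne.smul_set hsmul
      _ = 1 / α * sInf N := by rw [Real.sInf_smul_of_nonneg (inv_nonneg.2 hα.le), one_div]; rfl

section

variable {n : ℕ}

theorem ip_add_left (X X' Y : Matrix (Fin n) (Fin n) ℝ) : ip (X + X') Y = ip X Y + ip X' Y := by
  simp [ip, add_mul, Matrix.trace_add]

theorem ip_smul_left (c : ℝ) (X Y : Matrix (Fin n) (Fin n) ℝ) : ip (c • X) Y = c * ip X Y := by
  simp [ip, Matrix.trace_smul]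

theorem stensor_apply_self (U : Finset (Fin n)) (i : Fin n) : stensor U i i = 1 := by
  unfold stensor sgn
  split <;> norm_num

theorem sum_smul_stensor_apply_self (y : Finset (Fin n) → ℝ) (i : Fin n) :
    (∑ U, y U • stensor U) i i = ∑ U, y U := by
  simp [Matrix.sum_apply, stensor_apply_self]

end

namespace ConicSetting

variable {n k : ℕ} (S : ConicSetting n k)

theorem lift_add {X X' : Matrix (Fin n) (Fin n) ℝ} (h : X ∈ S.lift) (h' : X' ∈ S.lift) :
    X + X' ∈ S.lift := by
  obtain ⟨P, ⟨hPs, hP⟩, Q, ⟨hQs, hQ⟩, rfl⟩ := h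
  obtain ⟨P', ⟨hPs', hP'⟩, Q', ⟨hQs', hQ'⟩, rfl⟩ := h'
  refine ⟨P + P', ⟨hPs.add hPs', fun Y hY => ?_⟩,
    Q + Q', ⟨hQs.add hQs', fun Y hYs hYL => ?_⟩, by abel⟩
  · rw [ip_add_left]
    exact add_nonneg (hP Y hY) (hP' Y hY)
  · rw [ip_add_left, hQ Y hYs hYL, hQ' Y hYs hYL, add_zero]

theorem lift_smul {c : ℝ} (hc : 0 ≤ c) {X : Matrix (Fin n) (Fin n) ℝ} (h : X ∈ S.lift) :
    c • X ∈ S.lift := by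
  obtain ⟨P, ⟨hPs, hP⟩, Q, ⟨hQs, hQ⟩, rfl⟩ := h
  refine ⟨c • P, ⟨hPs.smul c, fun Y hY => ?_⟩,
    c • Q, ⟨hQs.smul c, fun Y hYs hYL => ?_⟩, smul_add c P Q⟩
  · rw [ip_smul_left]
    exact mul_nonneg hc (hP Y hY)
  · rw [ip_smul_left, hQ Y hYs hYL, mul_zero]

theorem zero_mem_A (hA : S.A.Nonempty) : (0 : Matrix (Fin n) (Fin n) ℝ) ∈ S.A := by
  obtain ⟨Y, hY⟩ := hA
  simpa using S.A_smul 0 le_rfl Y hY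

theorem sum_smul_stensor_mem_A (hA : S.A.Nonempty) {y : Finset (Fin n) → ℝ}
    (hy0 : ∀ U, 0 ≤ y U) (hyF : ∀ U, U ∉ S.FA → y U = 0) : ∑ U, y U • stensor U ∈ S.A := by
  refine Finset.sum_induction _ (· ∈ S.A) (fun X Y hX hY => S.A_add X hX Y hY) (S.zero_mem_A hA)
    fun U _ => ?_
  by_cases hU : U ∈ S.FA
  · exact S.A_smul _ (hy0 U) _ hU
  · rw [hyF U hU, zero_smul]
    exact S.zero_mem_A hA

/-- `fevc Z` and `ν°(Z)` are, by definition, the infima of `coverValues Z` and `polarValues Z`. -/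
def coverValues (Z : Matrix (Fin n) (Fin n) ℝ) : Set ℝ :=
  {r | ∃ y, S.CoverFeas Z y ∧ r = ∑ U : Finset (Fin n), y U}

def polarValues (Z : Matrix (Fin n) (Fin n) ℝ) : Set ℝ :=
  {μ | 0 ≤ μ ∧ ∃ Y ∈ S.A, (∀ i, Y i i = μ) ∧ Y - Z ∈ S.lift}

def AdmitsRounding (α : ℝ) : Prop :=
  ∀ Y ∈ S.A, (∀ i, Y i i = 1) →
    ∃ p : Finset (Fin n) → ℝ, (∀ U, 0 ≤ p U) ∧ (∀ U, U ∉ S.FA → p U = 0) ∧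
      (∑ U : Finset (Fin n), p U) = 1 ∧
      (∑ U : Finset (Fin n), p U • stensor U) - α • Y ∈ S.lift

theorem coverValues_subset_polarValues (hA : S.A.Nonempty) (Z : Matrix (Fin n) (Fin n) ℝ) :
    S.coverValues Z ⊆ S.polarValues Z := by
  rintro r ⟨y, ⟨hy0, hyF, hylift⟩, rfl⟩
  exact ⟨Finset.sum_nonneg fun U _ => hy0 U, _, S.sum_smul_stensor_mem_A hA hy0 hyF,
    sum_smul_stensor_apply_self y, hylift⟩

theorem zero_mem_coverValues (hpsd : ∀ X ∈ S.A, X.PosSemidef) {Z : Matrix (Fin n) (Fin n) ℝ}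
    (h : 0 ∈ S.polarValues Z) : 0 ∈ S.coverValues Z := by
  obtain ⟨-, Y, hYA, hYd, hYlift⟩ := h
  rw [(hpsd Y hYA).eq_zero_of_diag_eq_zero hYd] at hYlift
  exact ⟨0, ⟨fun _ => le_rfl, fun _ _ => rfl, by simpa using hYlift⟩, by simp⟩

theorem div_mem_coverValues_of_pos {α : ℝ} (hα : 0 < α) (hround : S.AdmitsRounding α)
    {Z : Matrix (Fin n) (Fin n) ℝ} {μ : ℝ} (hμ : 0 < μ) (h : μ ∈ S.polarValues Z) :
    μ / α ∈ S.coverValues Z := by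
  obtain ⟨-, Y, hYA, hYd, hYlift⟩ := h
  obtain ⟨p, hp0, hpF, hp1, hplift⟩ := hround (μ⁻¹ • Y) (S.A_smul _ (inv_nonneg.2 hμ.le) Y hYA)
    fun i => by simp [hYd i, hμ.ne']
  have hc : 0 ≤ μ / α := by positivity
  have hsum : (∑ U, (μ / α * p U) • stensor U) - Z
      = (μ / α) • ((∑ U, p U • stensor U) - α • μ⁻¹ • Y) + (Y - Z) := by
    rw [smul_sub, Finset.smul_sum, smul_smul, smul_smul, div_mul_cancel₀ _ hα.ne',
      mul_inv_cancel₀ hμ.ne', one_smul]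
    simp only [smul_smul]
    abel
  refine ⟨fun U => μ / α * p U, ⟨fun U => mul_nonneg hc (hp0 U),
    fun U hU => by simp [hpF U hU], ?_⟩, by rw [← Finset.mul_sum, hp1, mul_one]⟩
  rw [hsum]
  exact S.lift_add (S.lift_smul hc hplift) hYlift

theorem div_mem_coverValues (hpsd : ∀ X ∈ S.A, X.PosSemidef) {α : ℝ} (hα : 0 < α)
    (hround : S.AdmitsRounding α) {Z : Matrix (Fin n) (Fin n) ℝ} {μ : ℝ}
    (h : μ ∈ S.polarValues Z) : μ / α ∈ S.coverValues Z := by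
  rcases h.1.eq_or_lt with rfl | hμ
  · simpa using S.zero_mem_coverValues hpsd h
  · exact S.div_mem_coverValues_of_pos hα hround hμ h

theorem fevc_eq_zero_of_A_eq_empty (hA : S.A = ∅) (Z : Matrix (Fin n) (Fin n) ℝ) :
    S.fevc Z = 0 := by
  have hsub : S.coverValues Z ⊆ {0} := by
    rintro r ⟨y, ⟨-, hyF, -⟩, rfl⟩
    have hy : ∀ U, y U = 0 := fun U => hyF U (by simp [FA, hA])
    simp [hy]
  show sInf (S.coverValues Z) = 0
  rcases Set.subset_singleton_iff_eq.1 hsub with h | h <;> simp [h]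

theorem nuPolar_eq_zero_of_A_eq_empty (hA : S.A = ∅) (Z : Matrix (Fin n) (Fin n) ℝ) :
    S.nuPolar Z = 0 := by
  simp [nuPolar, hA]

end ConicSetting

theorem dual_rounding_sandwich_general {n k : ℕ} (S : ConicSetting n k)
    (hS : S.Assumptions) (α : ℝ) (hα : 0 < α)
    (hround : ∀ Y ∈ S.A, (∀ i, Y i i = 1) →
      ∃ p : Finset (Fin n) → ℝ, (∀ U, 0 ≤ p U) ∧ (∀ U, U ∉ S.FA → p U = 0) ∧
        (∑ U : Finset (Fin n), p U) = 1 ∧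
        (∑ U : Finset (Fin n), p U • stensor U) - α • Y ∈ S.lift) :
    ∀ Z ∈ S.Kstar, S.nuPolar Z ≤ S.fevc Z ∧ S.fevc Z ≤ (1 / α) * S.nuPolar Z := by
  intro Z _
  rcases S.A.eq_empty_or_nonempty with hA | hA
  · simp [S.fevc_eq_zero_of_A_eq_empty hA, S.nuPolar_eq_zero_of_A_eq_empty hA]
  · exact Real.sInf_le_sInf_and_sInf_le_of_div_mem hα (fun _ hμ => hμ.1)
      (S.coverValues_subset_polarValues hA Z)
      fun _ hμ => S.div_mem_coverValues hS.A_psd hα hround hμ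

/-- dual rounding sandwich: under the conic assumptions, if `α > 0`
is such that every `Y ∈ A` with unit diagonal admits a probability vector
`p ∈ ℝ₊^{F(A)}` with `∑_U p_U s_U s_Uᵀ − αY ∈ lift`, then
`ν°(Z) ≤ fevc(Z) ≤ (1/α)·ν°(Z)` for every `Z ∈ K*`. -/
theorem dual_rounding_sandwich {n k : ℕ} (hn : 1 ≤ n) (S : ConicSetting n k)
    (hS : S.Assumptions) (α : ℝ) (hα : 0 < α)
    (hround : ∀ Y ∈ S.A, (∀ i, Y i i = 1) →
      ∃ p : Finset (Fin n) → ℝ, (∀ U, 0 ≤ p U) ∧ (∀ U, U ∉ S.FA → p U = 0) ∧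
        (∑ U : Finset (Fin n), p U) = 1 ∧
        (∑ U : Finset (Fin n), p U • stensor U) - α • Y ∈ S.lift) :
    ∀ Z ∈ S.Kstar, S.nuPolar Z ≤ S.fevc Z ∧ S.fevc Z ≤ (1 / α) * S.nuPolar Z :=
  dual_rounding_sandwich_general S hS α hα hround
end
end

section
/- Projected gauge duality for the polyhedral case: let n, d ≥ 1, let A ⊆ Sym(n) be a closed convex cone with A ⊆ PSD(n) such that the convex cone generated by CUT^A has nonempty interior in Sym(n), and let 𝒜 : R^d → Sym(n) be a linear map with 𝒜(e_i) ∈ A* and 𝒜(e_i) ≠ 0 for each i ∈ [d], where A* := {X ∈ Sym(n) : ⟨X,Y⟩ ≥ 0 for all Y ∈ A}. Define maxq_𝒜(w) := max{s_Uᵀ 𝒜(w) s_U : U ∈ F(A)} for w ∈ R_+^d. Then maxq_𝒜 is a positive definite monotone gauge on R_+^d, and for every z ∈ R_+^d its dual gauge satisfies maxq_𝒜°(z) = min{∑_{U∈F(A)} y_U : y ∈ R_+^{F(A)}, ∑_{U∈F(A)} y_U 𝒜*(s_U s_Uᵀ) ≥ z coordinatewise}, with this minimum attained; here 𝒜*(X)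 := (⟨𝒜(e_i), X⟩)_{i∈[d]}. -/
open Matrix Finset

noncomputable section

/-- `F(A) := {U ⊆ [n] : s_U s_Uᵀ ∈ A}`. -/
def FA {n : ℕ} (A : Set (Matrix (Fin n) (Fin n) ℝ)) : Set (Finset (Fin n)) :=
  {U | stensor U ∈ A}

/-- The convex cone generated by `CUT^A = conv{s_U s_Uᵀ : U ∈ F(A)}`. -/
def coneCUT {n : ℕ} (A : Set (Matrix (Fin n) (Fin n) ℝ)) : Set (Matrix (Fin n) (Fin n) ℝ) :=
  {X | ∃ y : Finset (Fin n) → ℝ, (∀ U, 0 ≤ y U) ∧ (∀ U, U ∉ FA A → y U = 0) ∧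
    X = ∑ U : Finset (Fin n), y U • stensor U}

/-- `φ` is a positive definite monotone gauge on the convex cone `C`:
nonnegative on `C`, `φ(0) = 0`, positively homogeneous, sublinear, positive on
nonzero points, and monotone for the order induced by `C`. -/
def IsPDMGauge {E : Type*} [AddCommGroup E] [Module ℝ E] (C : Set E) (φ : E → ℝ) : Prop :=
  (∀ x ∈ C, 0 ≤ φ x) ∧
  φ 0 = 0 ∧
  (∀ c : ℝ, 0 ≤ c → ∀ x ∈ C, φ (c • x) = c * φ x) ∧
  (∀ x ∈ C, ∀ y ∈ C, φ (x + y) ≤ φ x + φ y) ∧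
  (∀ x ∈ C, x ≠ 0 → 0 < φ x) ∧
  (∀ x ∈ C, ∀ y ∈ C, y - x ∈ C → φ x ≤ φ y)

/-- `maxq_𝒜(w) := max{s_Uᵀ 𝒜(w) s_U : U ∈ F(A)}`. -/
noncomputable def maxqA {n d : ℕ} (A : Set (Matrix (Fin n) (Fin n) ℝ))
    (𝒜 : (Fin d → ℝ) →ₗ[ℝ] Matrix (Fin n) (Fin n) ℝ) (w : Fin d → ℝ) : ℝ :=
  sSup {r | ∃ U ∈ FA A, r = qform (𝒜 w) (sgn U)}

/-- The adjoint `𝒜*(X) := (⟨𝒜(eᵢ), X⟩)ᵢ`. -/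
noncomputable def adjA {n d : ℕ} (𝒜 : (Fin d → ℝ) →ₗ[ℝ] Matrix (Fin n) (Fin n) ℝ)
    (X : Matrix (Fin n) (Fin n) ℝ) : Fin d → ℝ :=
  fun i => ip (𝒜 (Pi.single i 1)) X

/-- The dual gauge `φ°(z) := sup{⟨z,w⟩ : w ∈ ℝ₊ᵈ, φ(w) ≤ 1}` of a gauge on `ℝ₊ᵈ`. -/
noncomputable def dualGauge {d : ℕ} (φ : (Fin d → ℝ) → ℝ) (z : Fin d → ℝ) : ℝ :=
  sSup {r | ∃ w : Fin d → ℝ, (∀ i, 0 ≤ w i) ∧ φ w ≤ 1 ∧ r = ∑ i, z i * w i}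

lemma ip_eq {n : ℕ} (X Y : Matrix (Fin n) (Fin n) ℝ) :
    ip X Y = ∑ i, ∑ j, X i j * Y j i := by
  simp [ip, Matrix.trace, Matrix.mul_apply, Matrix.diag]

lemma ip_stensor {n : ℕ} (X : Matrix (Fin n) (Fin n) ℝ) (U : Finset (Fin n)) :
    ip X (stensor U) = qform X (sgn U) := by
  rw [ip_eq]
  unfold qform stensor
  congr 1; funext i; congr 1; funext j; ring

lemma adjA_eq {n d : ℕ} (𝒜 : (Fin d → ℝ) →ₗ[ℝ] Matrix (Fin n) (Fin n) ℝ)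
    (U : Finset (Fin n)) (i : Fin d) :
    adjA 𝒜 (stensor U) i = qform (𝒜 (Pi.single i 1)) (sgn U) := by
  rw [adjA, ip_stensor]

lemma qform_sum {n : ℕ} {ι : Type*} (s : Finset ι) (W : ι → Matrix (Fin n) (Fin n) ℝ)
    (v : Fin n → ℝ) : qform (∑ k ∈ s, W k) v = ∑ k ∈ s, qform (W k) v := by
  unfold qform
  simp only [Matrix.sum_apply, Finset.sum_mul, Finset.mul_sum]
  have h1 : ∀ i : Fin n, ∑ j, ∑ k ∈ s, v i * W k i j * v j
      = ∑ k ∈ s, ∑ j, v i * W k i j * v j := fun i => Finset.sum_comm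
  simp only [h1]
  exact Finset.sum_comm

lemma qform_smul {n : ℕ} (c : ℝ) (W : Matrix (Fin n) (Fin n) ℝ) (v : Fin n → ℝ) :
    qform (c • W) v = c * qform W v := by
  unfold qform
  rw [Finset.mul_sum]
  congr 1; funext i
  rw [Finset.mul_sum]
  congr 1; funext j
  simp [Matrix.smul_apply]; ring

lemma qform_A {n d : ℕ} (𝒜 : (Fin d → ℝ) →ₗ[ℝ] Matrix (Fin n) (Fin n) ℝ)
    (w : Fin d → ℝ) (U : Finset (Fin n)) :
    qform (𝒜 w) (sgn U) = ∑ i, w i * adjA 𝒜 (stensor U) i := by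
  have hw : w = ∑ i : Fin d, w i • (Pi.single i (1:ℝ) : Fin d → ℝ) := by
    funext j
    rw [Finset.sum_apply]
    simp [Pi.single_apply]
  conv_lhs => rw [hw, map_sum]
  rw [qform_sum]
  congr 1; funext i
  rw [_root_.map_smul, qform_smul, adjA_eq]
lemma ip_add2 {n : ℕ} (B X Y : Matrix (Fin n) (Fin n) ℝ) :
    ip B (X + Y) = ip B X + ip B Y := by
  simp [ip, Matrix.mul_add]

lemma ip_smul2 {n : ℕ} (B X : Matrix (Fin n) (Fin n) ℝ) (c : ℝ) :
    ip B (c • X) = c * ip B X := by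
  simp [ip, Matrix.mul_smul]

lemma ip_sum_smul {n : ℕ} {ι : Type*} (B : Matrix (Fin n) (Fin n) ℝ) (s : Finset ι)
    (c : ι → ℝ) (Y : ι → Matrix (Fin n) (Fin n) ℝ) :
    ip B (∑ k ∈ s, c k • Y k) = ∑ k ∈ s, c k * ip B (Y k) := by
  simp [ip, Matrix.mul_sum, Matrix.mul_smul, Matrix.trace_sum]

lemma ip_self_pos {n : ℕ} (B : Matrix (Fin n) (Fin n) ℝ) (hs : B.IsSymm) (hB : B ≠ 0) :
    0 < ip B B := by
  rw [ip_eq]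
  have hsq : ∀ i j : Fin n, B i j * B j i = (B i j)^2 := by
    intro i j; rw [hs.apply j i]; ring
  simp only [hsq]
  have hnn : 0 ≤ ∑ i : Fin n, ∑ j : Fin n, (B i j)^2 :=
    Finset.sum_nonneg fun i _ => Finset.sum_nonneg fun j _ => sq_nonneg _
  rcases hnn.lt_or_eq with h | h
  · exact h
  · exfalso
    apply hB
    funext i j
    have h2 := (Finset.sum_eq_zero_iff_of_nonneg
      (fun i _ => Finset.sum_nonneg fun j _ => sq_nonneg (B i j))).mp h.symm i (Finset.mem_univ i)
    have h3 := (Finset.sum_eq_zero_iff_of_nonneg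
      (fun j _ => sq_nonneg (B i j))).mp h2 j (Finset.mem_univ j)
    exact pow_eq_zero_iff (n := 2) (by norm_num) |>.mp h3

/-- Key consequence of the interior hypothesis: each `𝒜 eᵢ` pairs strictly positively
with some cut matrix in `F(A)`. -/
lemma exists_pos_pairing {n d : ℕ} (A : Set (Matrix (Fin n) (Fin n) ℝ))
    (h_int : (interior {X : {M : Matrix (Fin n) (Fin n) ℝ // M.IsSymm} |
      (X : Matrix (Fin n) (Fin n) ℝ) ∈ coneCUT A}).Nonempty)
    (𝒜 : (Fin d → ℝ) →ₗ[ℝ] Matrix (Fin n) (Fin n) ℝ)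
    (h𝒜_dual : ∀ i : Fin d, 𝒜 (Pi.single i 1) ∈ dualSet A)
    (h𝒜_ne : ∀ i : Fin d, 𝒜 (Pi.single i 1) ≠ 0) (i : Fin d) :
    ∃ U ∈ FA A, 0 < adjA 𝒜 (stensor U) i := by
  by_contra hcon
  push_neg at hcon
  set B := 𝒜 (Pi.single i 1) with hBdef
  have hzero : ∀ U ∈ FA A, ip B (stensor U) = 0 := by
    intro U hU
    have h1 : 0 ≤ ip B (stensor U) := (h𝒜_dual i).2 _ hU
    have h2 : ip B (stensor U) ≤ 0 := hcon U hU
    linarith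
  have hip0 : ∀ X ∈ coneCUT A, ip B X = 0 := by
    rintro X ⟨y, hy0, hsupp, rfl⟩
    rw [ip_sum_smul]
    apply Finset.sum_eq_zero
    intro U _
    by_cases hU : U ∈ FA A
    · rw [hzero U hU, mul_zero]
    · rw [hsupp U hU, zero_mul]
  obtain ⟨X0, hX0⟩ := h_int
  set S : Set {M : Matrix (Fin n) (Fin n) ℝ // M.IsSymm} :=
    {X | (X : Matrix (Fin n) (Fin n) ℝ) ∈ coneCUT A} with hSdef
  have hBsym : B.IsSymm := (h𝒜_dual i).1
  have hγcont : Continuous fun c : ℝ =>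
      (⟨X0.val + c • B, by
        exact Matrix.IsSymm.add X0.2 (hBsym.smul c)⟩ : {M : Matrix (Fin n) (Fin n) ℝ // M.IsSymm}) := by
    apply Continuous.subtype_mk
    exact continuous_const.add (continuous_id.smul continuous_const)
  have hγ0 : (⟨X0.val + (0:ℝ) • B, by
      exact Matrix.IsSymm.add X0.2 (hBsym.smul 0)⟩ : {M : Matrix (Fin n) (Fin n) ℝ // M.IsSymm}) = X0 := by
    apply Subtype.ext; simp
  have hnhds : S ∈ nhds X0 := mem_interior_iff_mem_nhds.mp hX0
  have hev : ∀ᶠ c : ℝ in nhds 0, (X0.val + c • B) ∈ coneCUT A := by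
    have := hγcont.continuousAt (x := (0:ℝ))
    have h2 : Filter.Tendsto (fun c : ℝ =>
        (⟨X0.val + c • B, Matrix.IsSymm.add X0.2 (hBsym.smul c)⟩ :
          {M : Matrix (Fin n) (Fin n) ℝ // M.IsSymm})) (nhds 0) (nhds X0) := by
      rw [ContinuousAt, hγ0] at this
      exact this
    exact h2.eventually_mem hnhds
  obtain ⟨ε, hε, hball⟩ := Metric.eventually_nhds_iff.mp hev
  have hc : X0.val + (ε/2) • B ∈ coneCUT A := by
    apply hball
    simp [abs_of_pos, hε, half_lt_self hε, Real.dist_eq, abs_of_nonneg (le_of_lt (half_pos hε))]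
  have hX0mem : (X0 : Matrix (Fin n) (Fin n) ℝ) ∈ coneCUT A := interior_subset (s := S) hX0
  have e1 : ip B (X0.val + (ε/2) • B) = 0 := hip0 _ hc
  have e2 : ip B X0.val = 0 := hip0 _ hX0mem
  rw [ip_add2, ip_smul2, e2, zero_add] at e1
  have hBB : ip B B = 0 := by
    have hε2 : (ε/2) ≠ 0 := by positivity
    exact (mul_eq_zero.mp e1).resolve_left hε2
  exact absurd hBB (ne_of_gt (ip_self_pos B hBsym (h𝒜_ne i)))
set_option maxHeartbeats 1000000 in
/-- The "dual feasible epigraph" cone is closed. -/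
lemma closed_dualfeas {d : ℕ} {ι : Type*} [Fintype ι] (s : Set ι) (a : ι → Fin d → ℝ) :
    IsClosed {p : (Fin d → ℝ) × ℝ | ∃ y : ι → ℝ, (∀ U, 0 ≤ y U) ∧ (∀ U, U ∉ s → y U = 0) ∧
      (∀ i, p.1 i ≤ ∑ U : ι, y U * a U i) ∧ (∑ U : ι, y U) ≤ p.2} := by
  rw [← isSeqClosed_iff_isClosed]
  intro x p hx hconv
  choose y hy0 hysupp hyfeas hysum using hx
  have hx2 : Filter.Tendsto (fun k => (x k).2) Filter.atTop (nhds p.2) :=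
    (continuous_snd.tendsto p).comp hconv
  have hx1 : ∀ i : Fin d, Filter.Tendsto (fun k => (x k).1 i) Filter.atTop (nhds (p.1 i)) :=
    fun i => ((continuous_apply i).tendsto p.1).comp ((continuous_fst.tendsto p).comp hconv)
  obtain ⟨N, hN⟩ : ∃ N : ℕ, ∀ k ≥ N, (x k).2 ≤ p.2 + 1 := by
    have := hx2.eventually (eventually_le_nhds (lt_add_one p.2))
    exact this.exists_forall_of_atTop
  have hmem : ∀ k : ℕ, y (k + N) ∈ Set.Icc (0 : ι → ℝ) (fun _ => p.2 + 1) := by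
    intro k
    constructor
    · intro U; exact hy0 _ U
    · intro U
      calc y (k + N) U ≤ ∑ V : ι, y (k + N) V :=
            Finset.single_le_sum (fun V _ => hy0 _ V) (Finset.mem_univ U)
        _ ≤ (x (k + N)).2 := hysum _
        _ ≤ p.2 + 1 := hN _ (Nat.le_add_left N k)
  obtain ⟨ylim, _, ψ, hψ, hconv_y⟩ :=
    (isCompact_Icc (a := (0 : ι → ℝ)) (b := fun _ => p.2 + 1)).tendsto_subseq hmem
  have hsub : Filter.Tendsto (fun k => ψ k + N) Filter.atTop Filter.atTop :=
    Filter.tendsto_atTop_mono (fun k => Nat.le_add_right (ψ k) N) hψ.tendsto_atTop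
  have hyU : ∀ U : ι, Filter.Tendsto (fun k => y (ψ k + N) U) Filter.atTop (nhds (ylim U)) :=
    fun U => ((continuous_apply U).tendsto ylim).comp hconv_y
  refine ⟨ylim, ?_, ?_, ?_, ?_⟩
  · intro U
    exact ge_of_tendsto (hyU U) (Filter.Eventually.of_forall fun k => hy0 _ U)
  · intro U hU
    exact tendsto_nhds_unique (hyU U)
      (by simpa [hysupp _ U hU] using (tendsto_const_nhds : Filter.Tendsto (fun _ : ℕ => (0:ℝ)) _ _))
  · intro i
    refine le_of_tendsto_of_tendsto' ((hx1 i).comp hsub)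
      (tendsto_finset_sum _ fun U _ => (hyU U).mul tendsto_const_nhds) ?_
    intro k
    exact hyfeas (ψ k + N) i
  · refine le_of_tendsto_of_tendsto'
      (tendsto_finset_sum _ fun U _ => hyU U) (hx2.comp hsub) ?_
    intro k
    exact hysum (ψ k + N)
/-- Shorthand for the vectors `a_U = 𝒜*(s_U s_Uᵀ)`. -/
def aa {n d : ℕ} (𝒜 : (Fin d → ℝ) →ₗ[ℝ] Matrix (Fin n) (Fin n) ℝ)
    (U : Finset (Fin n)) (i : Fin d) : ℝ := adjA 𝒜 (stensor U) i

/-- Shorthand for the linear functionals `w ↦ ⟨a_U, w⟩`. -/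
def ll {n d : ℕ} (𝒜 : (Fin d → ℝ) →ₗ[ℝ] Matrix (Fin n) (Fin n) ℝ)
    (U : Finset (Fin n)) (w : Fin d → ℝ) : ℝ := ∑ i, w i * aa 𝒜 U i

lemma maxqA_eq {n d : ℕ} (A : Set (Matrix (Fin n) (Fin n) ℝ))
    (𝒜 : (Fin d → ℝ) →ₗ[ℝ] Matrix (Fin n) (Fin n) ℝ) (w : Fin d → ℝ) :
    maxqA A 𝒜 w = sSup {r | ∃ U ∈ FA A, r = ll 𝒜 U w} := by
  unfold maxqA
  congr 1
  ext r
  simp only [Set.mem_setOf_eq, qform_A, ll, aa]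

lemma lset_finite {n d : ℕ} (A : Set (Matrix (Fin n) (Fin n) ℝ))
    (𝒜 : (Fin d → ℝ) →ₗ[ℝ] Matrix (Fin n) (Fin n) ℝ) (w : Fin d → ℝ) :
    {r | ∃ U ∈ FA A, r = ll 𝒜 U w}.Finite := by
  have : {r | ∃ U ∈ FA A, r = ll 𝒜 U w} = (fun U => ll 𝒜 U w) '' (FA A) := by
    ext r; simp [Set.mem_image, eq_comm]
  rw [this]
  exact (Set.toFinite (FA A)).image _

lemma lset_nonempty {n d : ℕ} {A : Set (Matrix (Fin n) (Fin n) ℝ)}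
    (hFA : (FA A).Nonempty)
    (𝒜 : (Fin d → ℝ) →ₗ[ℝ] Matrix (Fin n) (Fin n) ℝ) (w : Fin d → ℝ) :
    {r | ∃ U ∈ FA A, r = ll 𝒜 U w}.Nonempty := by
  obtain ⟨U, hU⟩ := hFA
  exact ⟨ll 𝒜 U w, U, hU, rfl⟩

lemma ll_le_maxq {n d : ℕ} {A : Set (Matrix (Fin n) (Fin n) ℝ)}
    {𝒜 : (Fin d → ℝ) →ₗ[ℝ] Matrix (Fin n) (Fin n) ℝ} {U : Finset (Fin n)}
    (hU : U ∈ FA A) (w : Fin d → ℝ) : ll 𝒜 U w ≤ maxqA A 𝒜 w := by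
  rw [maxqA_eq]
  exact le_csSup (lset_finite A 𝒜 w).bddAbove ⟨U, hU, rfl⟩

lemma maxq_le {n d : ℕ} {A : Set (Matrix (Fin n) (Fin n) ℝ)}
    (hFA : (FA A).Nonempty)
    {𝒜 : (Fin d → ℝ) →ₗ[ℝ] Matrix (Fin n) (Fin n) ℝ} {w : Fin d → ℝ} {c : ℝ}
    (h : ∀ U ∈ FA A, ll 𝒜 U w ≤ c) : maxqA A 𝒜 w ≤ c := by
  rw [maxqA_eq]
  exact csSup_le (lset_nonempty hFA 𝒜 w) (by rintro r ⟨U, hU, rfl⟩; exact h U hU)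

lemma maxq_mem {n d : ℕ} {A : Set (Matrix (Fin n) (Fin n) ℝ)}
    (hFA : (FA A).Nonempty)
    {𝒜 : (Fin d → ℝ) →ₗ[ℝ] Matrix (Fin n) (Fin n) ℝ} (w : Fin d → ℝ) :
    ∃ U ∈ FA A, maxqA A 𝒜 w = ll 𝒜 U w := by
  rw [maxqA_eq]
  have := (lset_nonempty hFA 𝒜 w).csSup_mem (lset_finite A 𝒜 w)
  obtain ⟨U, hU, h⟩ := this
  exact ⟨U, hU, h⟩

lemma maxq_zero {n d : ℕ} {A : Set (Matrix (Fin n) (Fin n) ℝ)}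
    (hFA : (FA A).Nonempty)
    (𝒜 : (Fin d → ℝ) →ₗ[ℝ] Matrix (Fin n) (Fin n) ℝ) : maxqA A 𝒜 0 = 0 := by
  apply le_antisymm
  · exact maxq_le hFA (fun U hU => by simp [ll])
  · obtain ⟨U, hU⟩ := hFA
    have := ll_le_maxq (𝒜 := 𝒜) hU (0 : Fin d → ℝ)
    simpa [ll] using this

lemma gauge_part {n d : ℕ} {A : Set (Matrix (Fin n) (Fin n) ℝ)}
    {𝒜 : (Fin d → ℝ) →ₗ[ℝ] Matrix (Fin n) (Fin n) ℝ}
    (hFA : (FA A).Nonempty)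
    (hann : ∀ U ∈ FA A, ∀ i : Fin d, 0 ≤ aa 𝒜 U i)
    (hpos : ∀ i : Fin d, ∃ U ∈ FA A, 0 < aa 𝒜 U i) :
    IsPDMGauge {w : Fin d → ℝ | ∀ i, 0 ≤ w i} (maxqA A 𝒜) := by
  have hll_nonneg : ∀ U ∈ FA A, ∀ w : Fin d → ℝ, (∀ i, 0 ≤ w i) → 0 ≤ ll 𝒜 U w := by
    intro U hU w hw
    exact Finset.sum_nonneg fun i _ => mul_nonneg (hw i) (hann U hU i)
  refine ⟨?_, maxq_zero hFA 𝒜, ?_, ?_, ?_, ?_⟩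
  · -- nonneg
    intro x hx
    obtain ⟨U, hU⟩ := hFA
    exact le_trans (hll_nonneg U hU x hx) (ll_le_maxq hU x)
  · -- homogeneity
    intro c hc x _
    have hll : ∀ U, ll 𝒜 U (c • x) = c * ll 𝒜 U x := by
      intro U; unfold ll; rw [Finset.mul_sum]; congr 1; funext i; simp; ring
    apply le_antisymm
    · apply maxq_le hFA
      intro U hU
      rw [hll]
      exact mul_le_mul_of_nonneg_left (ll_le_maxq hU x) hc
    · obtain ⟨U, hU, hmax⟩ := maxq_mem hFA x
      rw [hmax, ← hll]
      exact ll_le_maxq hU _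
  · -- subadditive
    intro x _ y _
    apply maxq_le hFA
    intro U hU
    have : ll 𝒜 U (x + y) = ll 𝒜 U x + ll 𝒜 U y := by
      unfold ll; rw [← Finset.sum_add_distrib]; congr 1; funext i; simp; ring
    rw [this]
    exact add_le_add (ll_le_maxq hU x) (ll_le_maxq hU y)
  · -- positive definite
    intro x hx hxne
    obtain ⟨i, hi⟩ : ∃ i, 0 < x i := by
      by_contra h
      push_neg at h
      exact hxne (funext fun i => le_antisymm (h i) (hx i))
    obtain ⟨U, hU, hAU⟩ := hpos i
    have h1 : 0 < x i * aa 𝒜 U i := mul_pos hi hAU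
    have h2 : x i * aa 𝒜 U i ≤ ll 𝒜 U x := by
      apply Finset.single_le_sum (f := fun j => x j * aa 𝒜 U j)
        (fun j _ => mul_nonneg (hx j) (hann U hU j)) (Finset.mem_univ i)
    exact lt_of_lt_of_le (lt_of_lt_of_le h1 h2) (ll_le_maxq hU x)
  · -- monotone
    intro x hx y hy hyx
    apply maxq_le hFA
    intro U hU
    refine le_trans ?_ (ll_le_maxq hU y)
    apply Finset.sum_le_sum
    intro i _
    have : x i ≤ y i := by have := hyx i; simp at this; linarith
    exact mul_le_mul_of_nonneg_right this (hann U hU i)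
set_option maxHeartbeats 1000000 in
lemma dual_part {n d : ℕ} {A : Set (Matrix (Fin n) (Fin n) ℝ)}
    {𝒜 : (Fin d → ℝ) →ₗ[ℝ] Matrix (Fin n) (Fin n) ℝ}
    (hFA : (FA A).Nonempty)
    (hann : ∀ U ∈ FA A, ∀ i : Fin d, 0 ≤ aa 𝒜 U i)
    (hpos : ∀ i : Fin d, ∃ U ∈ FA A, 0 < aa 𝒜 U i)
    (z : Fin d → ℝ) (hz : ∀ i, 0 ≤ z i) :
    ∃ y : Finset (Fin n) → ℝ, (∀ U, 0 ≤ y U) ∧ (∀ U, U ∉ FA A → y U = 0) ∧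
      (∀ i, z i ≤ ∑ U : Finset (Fin n), y U * aa 𝒜 U i) ∧
      (∑ U : Finset (Fin n), y U) = dualGauge (maxqA A 𝒜) z ∧
      (∀ y' : Finset (Fin n) → ℝ, (∀ U, 0 ≤ y' U) → (∀ U, U ∉ FA A → y' U = 0) →
        (∀ i, z i ≤ ∑ U : Finset (Fin n), y' U * aa 𝒜 U i) →
        dualGauge (maxqA A 𝒜) z ≤ ∑ U : Finset (Fin n), y' U) := by
  classical
  have hgauge := gauge_part hFA hann hpos
  set φ := maxqA A 𝒜 with hφdef
  set R : Set ℝ := {r | ∃ w : Fin d → ℝ, (∀ i, 0 ≤ w i) ∧ φ w ≤ 1 ∧ r = ∑ i, z i * w i}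
    with hRdef
  have hdg : dualGauge φ z = sSup R := rfl
  have hR0 : (0:ℝ) ∈ R := ⟨0, fun i => le_refl 0,
    by rw [hφdef, maxq_zero hFA]; norm_num, by simp⟩
  have hRne : R.Nonempty := ⟨0, hR0⟩
  -- Weak duality
  have hweak : ∀ y' : Finset (Fin n) → ℝ, (∀ U, 0 ≤ y' U) → (∀ U, U ∉ FA A → y' U = 0) →
      (∀ i, z i ≤ ∑ U : Finset (Fin n), y' U * aa 𝒜 U i) → ∀ r ∈ R, r ≤ ∑ U : Finset (Fin n), y' U := by
    intro y' hy0 hysupp hyfeas r hr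
    obtain ⟨w, hw0, hφw, rfl⟩ := hr
    calc ∑ i, z i * w i
        ≤ ∑ i, (∑ U : Finset (Fin n), y' U * aa 𝒜 U i) * w i :=
          Finset.sum_le_sum fun i _ => mul_le_mul_of_nonneg_right (hyfeas i) (hw0 i)
      _ = ∑ U : Finset (Fin n), y' U * ll 𝒜 U w := by
          simp only [Finset.sum_mul]
          rw [Finset.sum_comm]
          congr 1; funext U
          rw [ll, Finset.mul_sum]
          congr 1; funext i; ring
      _ ≤ ∑ U : Finset (Fin n), y' U := by
          apply Finset.sum_le_sum
          intro U _
          by_cases hU : U ∈ FA A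
          · calc y' U * ll 𝒜 U w ≤ y' U * 1 :=
                mul_le_mul_of_nonneg_left ((ll_le_maxq hU w).trans hφw) (hy0 U)
              _ = y' U := mul_one _
          · simp [hysupp U hU]
  -- A dual feasible point exists
  choose Ufn hUfn1 hUfn2 using hpos
  set y0 : Finset (Fin n) → ℝ :=
    fun U => ∑ i : Fin d, if U = Ufn i then z i / aa 𝒜 (Ufn i) i else 0 with hy0def
  have hy00 : ∀ U, 0 ≤ y0 U := by
    intro U
    apply Finset.sum_nonneg
    intro i _
    split
    · exact div_nonneg (hz i) (hUfn2 i).le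
    · exact le_refl 0
  have hy0supp : ∀ U, U ∉ FA A → y0 U = 0 := by
    intro U hU
    apply Finset.sum_eq_zero
    intro i _
    rw [if_neg]
    rintro rfl
    exact hU (hUfn1 i)
  have hy0feas : ∀ j, z j ≤ ∑ U : Finset (Fin n), y0 U * aa 𝒜 U j := by
    intro j
    have hswap : ∑ U : Finset (Fin n), y0 U * aa 𝒜 U j
        = ∑ i : Fin d, (z i / aa 𝒜 (Ufn i) i) * aa 𝒜 (Ufn i) j := by
      simp only [hy0def, Finset.sum_mul]
      rw [Finset.sum_comm]
      congr 1; funext i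
      simp only [ite_mul, zero_mul]
      rw [Finset.sum_ite_eq' Finset.univ (Ufn i)
        (fun U => z i / aa 𝒜 (Ufn i) i * aa 𝒜 U j)]
      simp
    rw [hswap]
    have hterm : (z j / aa 𝒜 (Ufn j) j) * aa 𝒜 (Ufn j) j = z j :=
      div_mul_cancel₀ _ (ne_of_gt (hUfn2 j))
    rw [← hterm]
    exact Finset.single_le_sum (f := fun i => (z i / aa 𝒜 (Ufn i) i) * aa 𝒜 (Ufn i) j)
      (fun i _ => mul_nonneg (div_nonneg (hz i) (hUfn2 i).le) (hann (Ufn i) (hUfn1 i) j))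
      (Finset.mem_univ j)
  have hbddR : BddAbove R := ⟨∑ U : Finset (Fin n), y0 U,
    fun r hr => hweak y0 hy00 hy0supp hy0feas r hr⟩
  -- The closed convex cone C
  set C : Set ((Fin d → ℝ) × ℝ) := {p : (Fin d → ℝ) × ℝ |
    ∃ y : Finset (Fin n) → ℝ, (∀ U, 0 ≤ y U) ∧ (∀ U, U ∉ FA A → y U = 0) ∧
      (∀ i, p.1 i ≤ ∑ U : Finset (Fin n), y U * aa 𝒜 U i) ∧
      (∑ U : Finset (Fin n), y U) ≤ p.2} with hCdef
  have hCclosed : IsClosed C := closed_dualfeas (FA A) (fun U i => aa 𝒜 U i)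
  have hCconvex : Convex ℝ C := by
    rintro p ⟨yp, hyp0, hypsupp, hypfeas, hypsum⟩ q ⟨yq, hyq0, hyqsupp, hyqfeas, hyqsum⟩
      α β hα hβ hαβ
    refine ⟨fun U => α * yp U + β * yq U, ?_, ?_, ?_, ?_⟩
    · intro U
      exact add_nonneg (mul_nonneg hα (hyp0 U)) (mul_nonneg hβ (hyq0 U))
    · intro U hU
      simp only [hypsupp U hU, hyqsupp U hU]; ring
    · intro i
      have h1 : (α • p + β • q).1 i = α * p.1 i + β * q.1 i := by simp
      rw [h1]
      have h2 : ∑ U : Finset (Fin n), (α * yp U + β * yq U) * aa 𝒜 U i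
          = α * (∑ U : Finset (Fin n), yp U * aa 𝒜 U i)
            + β * (∑ U : Finset (Fin n), yq U * aa 𝒜 U i) := by
        rw [Finset.mul_sum, Finset.mul_sum, ← Finset.sum_add_distrib]
        congr 1; funext U; ring
      rw [h2]
      exact add_le_add (mul_le_mul_of_nonneg_left (hypfeas i) hα)
        (mul_le_mul_of_nonneg_left (hyqfeas i) hβ)
    · have h1 : (α • p + β • q).2 = α * p.2 + β * q.2 := by simp
      rw [h1]
      have h2 : ∑ U : Finset (Fin n), (α * yp U + β * yq U)
          = α * (∑ U : Finset (Fin n), yp U) + β * (∑ U : Finset (Fin n), yq U) := by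
        rw [Finset.mul_sum, Finset.mul_sum, ← Finset.sum_add_distrib]
      rw [h2]
      exact add_le_add (mul_le_mul_of_nonneg_left hypsum hα)
        (mul_le_mul_of_nonneg_left hyqsum hβ)
  have hCsmul : ∀ (t : ℝ), 0 ≤ t → ∀ p ∈ C, t • p ∈ C := by
    rintro t ht p ⟨yp, hyp0, hypsupp, hypfeas, hypsum⟩
    refine ⟨fun U => t * yp U, fun U => mul_nonneg ht (hyp0 U), ?_, ?_, ?_⟩
    · intro U hU; simp only [hypsupp U hU, mul_zero]
    · intro i
      have h1 : (t • p).1 i = t * p.1 i := by simp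
      have h2 : ∑ U : Finset (Fin n), (t * yp U) * aa 𝒜 U i
          = t * ∑ U : Finset (Fin n), yp U * aa 𝒜 U i := by
        rw [Finset.mul_sum]; congr 1; funext U; ring
      rw [h1, h2]
      exact mul_le_mul_of_nonneg_left (hypfeas i) ht
    · have h1 : (t • p).2 = t * p.2 := by simp
      have h2 : ∑ U : Finset (Fin n), (t * yp U) = t * ∑ U : Finset (Fin n), yp U :=
        (Finset.mul_sum _ _ _).symm
      rw [h1, h2]
      exact mul_le_mul_of_nonneg_left hypsum ht
  have h0C : (0 : (Fin d → ℝ) × ℝ) ∈ C := by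
    refine ⟨0, fun U => le_refl 0, fun U _ => rfl, ?_, by simp⟩
    intro i; simp
  -- Strong duality: (z, sSup R) ∈ C
  have hmemC : ((z, sSup R) : (Fin d → ℝ) × ℝ) ∈ C := by
    by_contra hnot
    obtain ⟨f, u, hfC, hfb⟩ := geometric_hahn_banach_closed_point hCconvex hCclosed hnot
    have hu : 0 < u := by simpa using hfC 0 h0C
    have hfle : ∀ p ∈ C, f p ≤ 0 := by
      intro p hp
      by_contra h
      push_neg at h
      have ht : (0:ℝ) ≤ (u + 1) / f p := div_nonneg (by linarith) h.le
      have := hfC _ (hCsmul _ ht p hp)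
      rw [_root_.map_smul, smul_eq_mul, div_mul_cancel₀ _ (ne_of_gt h)] at this
      linarith
    set wt : Fin d → ℝ := fun i => f ((Pi.single i (1:ℝ) : Fin d → ℝ), (0:ℝ)) with hwtdef
    set τ : ℝ := f ((0 : Fin d → ℝ), (1:ℝ)) with hτdef
    have hdecomp : ∀ p : (Fin d → ℝ) × ℝ, f p = (∑ i, p.1 i * wt i) + p.2 * τ := by
      intro p
      have hp : p = (∑ i : Fin d, p.1 i • (((Pi.single i (1:ℝ) : Fin d → ℝ), (0:ℝ)) :
          (Fin d → ℝ) × ℝ)) + p.2 • (((0 : Fin d → ℝ), (1:ℝ)) : (Fin d → ℝ) × ℝ) := by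
        apply Prod.ext
        · rw [Prod.fst_add, Prod.fst_sum]
          funext j
          simp [Finset.sum_apply, Pi.single_apply]
        · rw [Prod.snd_add, Prod.snd_sum]
          simp
      conv_lhs => rw [hp]
      rw [map_add, map_sum, _root_.map_smul, smul_eq_mul]
      congr 1
      congr 1
      funext i
      rw [_root_.map_smul, smul_eq_mul]
    have hwt0 : ∀ i, 0 ≤ wt i := by
      intro i
      have hmemi : ((-(Pi.single i (1:ℝ)) : Fin d → ℝ), (0:ℝ)) ∈ C := by
        refine ⟨0, fun U => le_refl 0, fun U _ => rfl, ?_, by simp⟩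
        intro j
        simp only [Pi.neg_apply, Pi.single_apply]
        split <;> simp
      have h := hfle _ hmemi
      rw [hdecomp] at h
      have he : (∑ j, ((-(Pi.single i (1:ℝ)) : Fin d → ℝ)) j * wt j) = -wt i := by
        simp [Pi.single_apply, ite_mul]
      rw [he] at h
      simp only [zero_mul, add_zero] at h
      linarith
    have hτle : τ ≤ 0 := by
      have hmem1 : ((0 : Fin d → ℝ), (1:ℝ)) ∈ C := by
        refine ⟨0, fun U => le_refl 0, fun U _ => rfl, ?_, by simp⟩
        intro j; simp
      have h := hfle _ hmem1
      rw [hdecomp] at h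
      simpa using h
    have hllwt : ∀ U ∈ FA A, ll 𝒜 U wt ≤ -τ := by
      intro U hU
      have hmemU : ((fun i => aa 𝒜 U i), (1:ℝ)) ∈ C := by
        refine ⟨fun V => if V = U then 1 else 0, ?_, ?_, ?_, ?_⟩
        · intro V; dsimp only; split <;> norm_num
        · intro V hV; dsimp only; rw [if_neg]; rintro rfl; exact hV hU
        · intro i
          have heq : ∑ V : Finset (Fin n), (if V = U then (1:ℝ) else 0) * aa 𝒜 V i
              = aa 𝒜 U i := by
            simp only [ite_mul, one_mul, zero_mul]
            rw [Finset.sum_ite_eq' Finset.univ U (fun V => aa 𝒜 V i)]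
            simp
          exact le_of_eq heq.symm
        · simp [Finset.sum_ite_eq' Finset.univ U (fun _ => (1:ℝ))]
      have h := hfle _ hmemU
      rw [hdecomp] at h
      have heq2 : ll 𝒜 U wt = ∑ i, aa 𝒜 U i * wt i := by
        unfold ll; congr 1; funext i; ring
      rw [heq2]
      simp only [one_mul] at h
      linarith
    have hfbz : u < (∑ i, z i * wt i) + sSup R * τ := by
      have h := hfb
      rw [hdecomp] at h
      simpa using h
    have hφwt : φ wt ≤ -τ := maxq_le hFA (fun U hU => hllwt U hU)
    rcases eq_or_lt_of_le hτle with hτ0 | hτneg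
    · by_cases hwtz : wt = 0
      · rw [hwtz, hτ0] at hfbz
        simp at hfbz
        linarith
      · have hposφ := hgauge.2.2.2.2.1 wt hwt0 hwtz
        rw [hτ0] at hφwt
        simp at hφwt
        linarith
    · have hc : 0 < (-τ)⁻¹ := inv_pos.mpr (by linarith)
      have hw' : ∀ i, 0 ≤ ((-τ)⁻¹ • wt) i := by
        intro i
        simp only [Pi.smul_apply, smul_eq_mul]
        exact mul_nonneg hc.le (hwt0 i)
      have hφw' : φ ((-τ)⁻¹ • wt) ≤ 1 := by
        have hh := hgauge.2.2.1 (-τ)⁻¹ hc.le wt hwt0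
        rw [hh]
        calc (-τ)⁻¹ * φ wt ≤ (-τ)⁻¹ * (-τ) := mul_le_mul_of_nonneg_left hφwt hc.le
          _ = 1 := inv_mul_cancel₀ (by linarith)
      have hrR : (∑ i, z i * ((-τ)⁻¹ • wt) i) ∈ R := ⟨_, hw', hφw', rfl⟩
      have hle := le_csSup hbddR hrR
      have hsum : (∑ i, z i * ((-τ)⁻¹ • wt) i) = (-τ)⁻¹ * ∑ i, z i * wt i := by
        rw [Finset.mul_sum]
        congr 1; funext i
        simp only [Pi.smul_apply, smul_eq_mul]; ring
      have h1 : (-τ) * sSup R < ∑ i, z i * wt i := by nlinarith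
      have h2 : (-τ)⁻¹ * ((-τ) * sSup R) < (-τ)⁻¹ * (∑ i, z i * wt i) :=
        mul_lt_mul_of_pos_left h1 hc
      rw [← mul_assoc, inv_mul_cancel₀ (by linarith : (-τ) ≠ 0), one_mul] at h2
      rw [hsum] at hle
      linarith
  obtain ⟨y, hy0, hysupp, hyfeas, hysum⟩ := hmemC
  have hub := csSup_le hRne (hweak y hy0 hysupp hyfeas)
  refine ⟨y, hy0, hysupp, hyfeas, ?_, ?_⟩
  · rw [hdg]
    exact le_antisymm hysum hub
  · intro y' h1 h2 h3
    rw [hdg]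
    exact csSup_le hRne (hweak y' h1 h2 h3)

/-- projected gauge duality for the polyhedral case: `maxq_𝒜` is a
positive definite monotone gauge on `ℝ₊ᵈ`, and for every `z ∈ ℝ₊ᵈ` its dual gauge equals
`min{∑_U y_U : y ∈ ℝ₊^{F(A)}, ∑_U y_U 𝒜*(s_U s_Uᵀ) ≥ z}`, the minimum being attained. -/
theorem projected_gauge_duality (n d : ℕ) (hn : 1 ≤ n) (hd : 1 ≤ d)
    (A : Set (Matrix (Fin n) (Fin n) ℝ))
    (hA_closed : IsClosed A)
    (hA_smul : ∀ c : ℝ, 0 ≤ c → ∀ X ∈ A, c • X ∈ A)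
    (hA_add : ∀ X ∈ A, ∀ Y ∈ A, X + Y ∈ A)
    (hA_psd : ∀ X ∈ A, X.PosSemidef)
    (h_int : (interior {X : {M : Matrix (Fin n) (Fin n) ℝ // M.IsSymm} |
      (X : Matrix (Fin n) (Fin n) ℝ) ∈ coneCUT A}).Nonempty)
    (𝒜 : (Fin d → ℝ) →ₗ[ℝ] Matrix (Fin n) (Fin n) ℝ)
    (h𝒜_dual : ∀ i : Fin d, 𝒜 (Pi.single i 1) ∈ dualSet A)
    (h𝒜_ne : ∀ i : Fin d, 𝒜 (Pi.single i 1) ≠ 0) :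
    IsPDMGauge {w : Fin d → ℝ | ∀ i, 0 ≤ w i} (maxqA A 𝒜) ∧
    ∀ z : Fin d → ℝ, (∀ i, 0 ≤ z i) →
      ∃ y : Finset (Fin n) → ℝ, (∀ U, 0 ≤ y U) ∧ (∀ U, U ∉ FA A → y U = 0) ∧
        (∀ i, z i ≤ ∑ U : Finset (Fin n), y U * adjA 𝒜 (stensor U) i) ∧
        (∑ U : Finset (Fin n), y U) = dualGauge (maxqA A 𝒜) z ∧
        (∀ y' : Finset (Fin n) → ℝ, (∀ U, 0 ≤ y' U) → (∀ U, U ∉ FA A → y' U = 0) →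
          (∀ i, z i ≤ ∑ U : Finset (Fin n), y' U * adjA 𝒜 (stensor U) i) →
          dualGauge (maxqA A 𝒜) z ≤ ∑ U : Finset (Fin n), y' U) := by
  have hann : ∀ U ∈ FA A, ∀ i : Fin d, 0 ≤ aa 𝒜 U i := by
    intro U hU i
    exact (h𝒜_dual i).2 _ hU
  have hpos : ∀ i : Fin d, ∃ U ∈ FA A, 0 < aa 𝒜 U i :=
    fun i => exists_pos_pairing A h_int 𝒜 h𝒜_dual h𝒜_ne i
  have hFA : (FA A).Nonempty := by
    obtain ⟨U, hU, -⟩ := hpos ⟨0, hd⟩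
    exact ⟨U, hU⟩
  exact ⟨gauge_part hFA hann hpos, fun z hz => dual_part hFA hann hpos z hz⟩
end
end
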